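/- Let R be a commutative unital ring, I an ideal of R, and M a flat R-module such that the inverse system {I^k ⊗_R M}_{k≥1} (with transition maps induced by the inclusions I^{k+1} ⊆ I^k) satisfies the Mittag-Leffler condition: for each k there exists j ≥ k such that for all l ≥ j, the image of I^l ⊗_R M → I^k ⊗_R M equals the image of I^j ⊗_R M → I^k ⊗_R M. Then there is a short exact sequence 0 → F_I(M) → M → Λ_I(M) → 0; in particular Λ_I(M) ≅ M/F_I(M) and F_I(M) = Ker(M → Λ_I(M)), where F_I(M) = lim_k (I^k ⊗_R M) and Λ_I(M) = lim_k M/I^k M is the I-adic completion. -/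

import Mathlib

/-!
STATEMENT 7: Let `R` be a commutative unital ring, `I` an ideal of `R`, and `M` a flat
`R`-module such that the inverse system `{I^k ⊗_R M}_{k ≥ 1}` (with transition maps induced
by the inclusions `I^{k+1} ⊆ I^k`) satisfies the Mittag-Leffler condition. Then there is a
short exact sequence `0 → F_I(M) → M → Λ_I(M) → 0`, where `F_I(M) = lim_k (I^k ⊗_R M)` and
`Λ_I(M) = lim_k M/I^k M` is the `I`-adic completion; in particular `Λ_I(M) ≅ M/F_I(M)` and
`F_I(M) = Ker(M → Λ_I(M))`.

Short exactness is expressed as: the canonical map `F_I(M) → M` is injective, its range is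
the kernel of the canonical map `M → Λ_I(M)`, and the latter map is surjective. We use
Mathlib's `AdicCompletion` for `Λ_I` with its canonical map `AdicCompletion.of`.
-/

universe u

open TensorProduct

/-- The inverse limit of an inverse system of `R`-modules indexed by `ℕ`
(with transition maps `f k l h : G l →ₗ[R] G k` for `h : k ≤ l`), realized as the submodule
of compatible families in the product. -/
def invLimit (R : Type u) [CommRing R] (G : ℕ → Type u) [∀ k, AddCommGroup (G k)]
    [∀ k, Module R (G k)] (f : ∀ k l : ℕ, k ≤ l → G l →ₗ[R] G k) :
    Submodule R (∀ k, G k) where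
  carrier := { x | ∀ (k l : ℕ) (h : k ≤ l), f k l h (x l) = x k }
  add_mem' := by
    intro a b ha hb k l h
    simp [ha k l h, hb k l h]
  zero_mem' := by
    intro k l h
    simp
  smul_mem' := by
    intro c a ha k l h
    simp [ha k l h]

/-- The inverse system `k ↦ I^(k+1) ⊗_R M` with transition maps induced by the inclusions
`I^(l+1) ⊆ I^(k+1)` for `k ≤ l`. -/
noncomputable def tensorPowDiagram (R : Type u) [CommRing R] (I : Ideal R) (M : Type u)
    [AddCommGroup M] [Module R M] :
    ∀ k l : ℕ, k ≤ l → (↥(I ^ (l + 1)) ⊗[R] M) →ₗ[R] (↥(I ^ (k + 1)) ⊗[R] M) :=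
  fun _ _ h =>
    LinearMap.rTensor M (Submodule.inclusion (Ideal.pow_le_pow_right (by omega)))

/-- `F_I(M) = lim_{k ≥ 1} (I^k ⊗_R M)`, the dual of the ideal transform. -/
noncomputable abbrev dualTransform (R : Type u) [CommRing R] (I : Ideal R) (M : Type u)
    [AddCommGroup M] [Module R M] : Submodule R (∀ k : ℕ, ↥(I ^ (k + 1)) ⊗[R] M) :=
  invLimit R (fun k : ℕ => ↥(I ^ (k + 1)) ⊗[R] M) (tensorPowDiagram R I M)

/-- The canonical map `F_I(M) → M`, given by following the degree-one component
`I ⊗_R M → R ⊗_R M ≅ M`. -/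
noncomputable def fromDualTransform (R : Type u) [CommRing R] (I : Ideal R) (M : Type u)
    [AddCommGroup M] [Module R M] : ↥(dualTransform R I M) →ₗ[R] M :=
  (((TensorProduct.lid R M).toLinearMap.comp
      (LinearMap.rTensor M (Submodule.subtype (I ^ (0 + 1))))).comp
    (LinearMap.proj 0)).comp (Submodule.subtype (dualTransform R I M))


/-! Flatness makes each map `I^k ⊗ M → M` injective, with image `I^k M`; hence `F_I(M)` is
identified through its first component with `⋂ₖ I^k M`, the kernel of `M → Λ_I(M)`. Pushed
into `M`, the Mittag-Leffler condition for `k = 1` says that the chain `I^k M` is eventually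
constant, so every `I`-adic Cauchy sequence converges to one of its own terms and
`M → Λ_I(M)` is onto. -/

namespace Ideal

variable {R : Type*} [CommRing R] (M : Type*) [AddCommGroup M] [Module R M]

noncomputable def tensorToModule (J : Ideal R) : J ⊗[R] M →ₗ[R] M :=
  (TensorProduct.lid R M).toLinearMap ∘ₗ J.subtype.rTensor M

theorem tensorToModule_comp_rTensor_inclusion {J J' : Ideal R} (h : J ≤ J') :
    J'.tensorToModule M ∘ₗ (Submodule.inclusion h).rTensor M = J.tensorToModule M := by
  rw [tensorToModule, LinearMap.comp_assoc, ← LinearMap.rTensor_comp,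
    Submodule.subtype_comp_inclusion, tensorToModule]

theorem range_tensorToModule (J : Ideal R) :
    LinearMap.range (J.tensorToModule M) = J • (⊤ : Submodule R M) :=
  J.subtype_rTensor_range M

theorem tensorToModule_injective [Module.Flat R M] (J : Ideal R) :
    Function.Injective (J.tensorToModule M) :=
  (TensorProduct.lid R M).injective.comp
    (Module.Flat.rTensor_preserves_injective_linearMap _ J.injective_subtype)

end Ideal

namespace AdicCompletion

variable {R : Type*} [CommRing R] (I : Ideal R) (M : Type*) [AddCommGroup M] [Module R M]

theorem ker_of : LinearMap.ker (of I M) = ⨅ n, I ^ n • (⊤ : Submodule R M) := by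
  ext x
  simp [AdicCompletion.ext_iff, of_apply, Submodule.Quotient.mk_eq_zero]

theorem isPrecomplete_of_pow_smul_top_eq {j : ℕ}
    (h : ∀ n, j ≤ n → I ^ n • (⊤ : Submodule R M) = I ^ j • ⊤) : IsPrecomplete I M := by
  refine isPrecomplete_iff.2 fun f hf => ⟨f j, fun n => ?_⟩
  rcases le_total n j with hn | hn
  · exact hf hn
  · rw [h n hn]
    exact (hf hn).symm

end AdicCompletion

section

variable (R : Type u) [CommRing R] (I : Ideal R) (M : Type u) [AddCommGroup M] [Module R M]

theorem tensorToModule_comp_tensorPowDiagram (k l : ℕ) (h : k ≤ l) :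
    (I ^ (k + 1)).tensorToModule M ∘ₗ tensorPowDiagram R I M k l h =
      (I ^ (l + 1)).tensorToModule M :=
  Ideal.tensorToModule_comp_rTensor_inclusion M _

theorem tensorToModule_apply_of_mem_dualTransform (x : dualTransform R I M) (k : ℕ) :
    (I ^ (k + 1)).tensorToModule M (x.1 k) = fromDualTransform R I M x := by
  rw [← tensorToModule_comp_tensorPowDiagram R I M 0 k k.zero_le, LinearMap.comp_apply,
    x.2 0 k k.zero_le]
  rfl

theorem fromDualTransform_injective [Module.Flat R M] :
    Function.Injective (fromDualTransform R I M) := fun x y hxy =>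
  Subtype.ext <| funext fun k => Ideal.tensorToModule_injective M _ <| by
    rw [tensorToModule_apply_of_mem_dualTransform, tensorToModule_apply_of_mem_dualTransform, hxy]

theorem range_fromDualTransform [Module.Flat R M] :
    LinearMap.range (fromDualTransform R I M) = ⨅ n, I ^ n • (⊤ : Submodule R M) := by
  apply le_antisymm
  · rintro _ ⟨x, rfl⟩
    refine Submodule.mem_iInf _ |>.2 fun n => Submodule.smul_mono_left
      (Ideal.pow_le_pow_right n.le_succ) ?_
    rw [← Ideal.range_tensorToModule, ← tensorToModule_apply_of_mem_dualTransform R I M x n]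
    exact LinearMap.mem_range_self _ _
  · intro m hm
    have hm' (k : ℕ) : m ∈ LinearMap.range ((I ^ (k + 1)).tensorToModule M) := by
      rw [Ideal.range_tensorToModule]
      exact Submodule.mem_iInf _ |>.1 hm (k + 1)
    choose y hy using hm'
    have hy_mem : y ∈ dualTransform R I M := fun k l h =>
      Ideal.tensorToModule_injective M _ <| by
        rw [← LinearMap.comp_apply, tensorToModule_comp_tensorPowDiagram, hy, hy]
    exact ⟨⟨y, hy_mem⟩,
      (tensorToModule_apply_of_mem_dualTransform R I M _ 0).symm.trans (hy 0)⟩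

theorem pow_smul_top_eq_of_range_tensorPowDiagram_eq {j : ℕ}
    (h : ∀ l, j ≤ l → LinearMap.range (tensorPowDiagram R I M 0 l l.zero_le) =
      LinearMap.range (tensorPowDiagram R I M 0 j j.zero_le)) (n : ℕ) (hn : j < n) :
    I ^ n • (⊤ : Submodule R M) = I ^ (j + 1) • ⊤ := by
  have image_range (l : ℕ) : (LinearMap.range (tensorPowDiagram R I M 0 l l.zero_le)).map
      ((I ^ (0 + 1)).tensorToModule M) = I ^ (l + 1) • ⊤ := by
    rw [← LinearMap.range_comp, tensorToModule_comp_tensorPowDiagram, Ideal.range_tensorToModule]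
  obtain ⟨l, rfl⟩ := Nat.exists_eq_add_of_lt hn
  rw [← image_range, ← image_range, h (j + l) (Nat.le_add_right j l)]

end

theorem stmt7 (R : Type u) [CommRing R] (I : Ideal R) (M : Type u) [AddCommGroup M]
    [Module R M] (hflat : Module.Flat R M)
    (hML : ∀ k : ℕ, ∃ j : ℕ, ∃ hkj : k ≤ j, ∀ l : ℕ, ∀ hjl : j ≤ l,
      LinearMap.range (tensorPowDiagram R I M k l (hkj.trans hjl)) =
        LinearMap.range (tensorPowDiagram R I M k j hkj)) :
    Function.Injective (fromDualTransform R I M) ∧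
      LinearMap.range (fromDualTransform R I M) = LinearMap.ker (AdicCompletion.of I M) ∧
      Function.Surjective (AdicCompletion.of I M) := by
  obtain ⟨j, _, hstable⟩ := hML 0
  refine ⟨fromDualTransform_injective R I M, ?_, ?_⟩
  · rw [range_fromDualTransform, AdicCompletion.ker_of]
  · exact AdicCompletion.of_surjective_iff.2 <|
      AdicCompletion.isPrecomplete_of_pow_smul_top_eq I M
        (pow_smul_top_eq_of_range_tensorPowDiagram_eq R I M hstable)
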